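/- Under the Markov intersection property, the graph G* = (V, E*) defined by (v,w) ∈ E* if and only if w ∈ ne(v) is undirected, i.e., w ∈ ne(v) if and only if v ∈ ne(w). -/
import Mathlib


open Classical
variable {V A : Type*} [Fintype V] [Fintype A] [DecidableEq V] [DecidableEq A]

/-- Marginal probability `π(a_U)` of observing the configuration `a` on the set `U`. -/
def margProb (π : (V → A) → ℝ) (U : Finset V) (a : V → A) : ℝ :=
  ∑ x ∈ Finset.univ.filter (fun x : V → A => ∀ u ∈ U, x u = a u), π x

/-- Conditional probability `π(a_v | a_W)`. -/
noncomputable def condProb (π : (V → A) → ℝ) (v : V) (W : Finset V) (a : V → A) : ℝ :=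
  margProb π (insert v W) a / margProb π W a

/-- `W` is a Markov neighborhood of `v`: `v ∉ W` and for every `U ⊇ W` with `v ∉ U`
and every configuration of positive probability, `π(a_v | a_U) = π(a_v | a_W)`. -/
def IsMarkovNbhd (π : (V → A) → ℝ) (v : V) (W : Finset V) : Prop :=
  v ∉ W ∧ ∀ U : Finset V, W ⊆ U → v ∉ U → ∀ a : V → A,
    0 < margProb π U a → condProb π v U a = condProb π v W a


/-- The basic neighborhood `ne(v)`: the intersection of all Markov neighborhoods of `v`. -/

noncomputable def basicNe (π : (V → A) → ℝ) (v : V) : Finset V :=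
  Finset.univ.filter (fun w => ∀ W : Finset V, IsMarkovNbhd π v W → w ∈ W)

lemma margProb_nonneg (π : (V → A) → ℝ) (hπ0 : ∀ x, 0 ≤ π x) (U : Finset V) (a : V → A) :
    0 ≤ margProb π U a :=
  Finset.sum_nonneg fun x _ => hπ0 x

lemma margProb_anti (π : (V → A) → ℝ) (hπ0 : ∀ x, 0 ≤ π x) {U U' : Finset V}
    (h : U' ⊆ U) (a : V → A) : margProb π U a ≤ margProb π U' a := by
  apply Finset.sum_le_sum_of_subset_of_nonneg
  · intro x hx
    simp only [Finset.mem_filter, Finset.mem_univ, true_and] at *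
    exact fun u hu => hx u (h hu)
  · intro x _ _
    exact hπ0 x

lemma margProb_univ (π : (V → A) → ℝ) (a : V → A) :
    margProb π Finset.univ a = π a := by
  have h : Finset.univ.filter (fun x : V → A => ∀ u ∈ Finset.univ, x u = a u) = {a} := by
    ext x
    simp [funext_iff]
  rw [margProb, h, Finset.sum_singleton]

/-- If `W` is a Markov neighborhood of `w` with `v ∉ W` (and `v ≠ w`), then
`univ \ {v, w}` is a Markov neighborhood of `v`. -/
lemma markov_swap (π : (V → A) → ℝ) (hπ0 : ∀ x, 0 ≤ π x) {v w : V} (hvw : v ≠ w)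
    {W : Finset V} (hW : IsMarkovNbhd π w W) (hv : v ∉ W) :
    IsMarkovNbhd π v ((Finset.univ.erase v).erase w) := by
  set S : Finset V := (Finset.univ.erase v).erase w with hS
  have hvS : v ∉ S := by simp [hS]
  have hwS : w ∉ S := by simp [hS]
  have hSv : S ⊆ Finset.univ.erase v := Finset.erase_subset _ _
  have hSw : S ⊆ Finset.univ.erase w := by
    intro u hu
    simp only [hS, Finset.mem_erase, Finset.mem_univ, and_true] at hu ⊢
    exact hu.1
  have hinsv : insert v S = Finset.univ.erase w := by
    ext u
    simp only [hS, Finset.mem_insert, Finset.mem_erase, Finset.mem_univ, and_true]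
    constructor
    · rintro (rfl | ⟨h1, h2⟩)
      · exact hvw
      · exact h1
    · intro h
      rcases eq_or_ne u v with rfl | hne
      · exact Or.inl rfl
      · exact Or.inr ⟨h, hne⟩
  have hinsw : insert w S = Finset.univ.erase v := by
    rw [hS, Finset.insert_erase (by simp [Ne.symm hvw])]
  have hWw : W ⊆ Finset.univ.erase w := fun u hu =>
    Finset.mem_erase.2 ⟨fun h => hW.1 (h ▸ hu), Finset.mem_univ u⟩
  have hWS : W ⊆ S := fun u hu =>
    Finset.mem_erase.2 ⟨fun h => hW.1 (h ▸ hu),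
      Finset.mem_erase.2 ⟨fun h => hv (h ▸ hu), Finset.mem_univ u⟩⟩
  -- the universal identity π(a) * π(a_S) = π(a_{erase v}) * π(a_{erase w})
  have I : ∀ a : V → A, π a * margProb π S a =
      margProb π (Finset.univ.erase v) a * margProb π (Finset.univ.erase w) a := by
    intro a
    by_cases hMw : 0 < margProb π (Finset.univ.erase w) a
    · have hMvw : 0 < margProb π S a := lt_of_lt_of_le hMw (margProb_anti π hπ0 hSw a)
      have h1 := hW.2 (Finset.univ.erase w) hWw (Finset.notMem_erase w _) a hMw
      have h2 := hW.2 S hWS hwS a hMvw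
      have h3 : condProb π w (Finset.univ.erase w) a = condProb π w S a := h1.trans h2.symm
      rw [condProb, condProb, Finset.insert_erase (Finset.mem_univ w), margProb_univ,
        hinsw] at h3
      have := (div_eq_div_iff (ne_of_gt hMw) (ne_of_gt hMvw)).1 h3
      linarith
    · have hMw0 : margProb π (Finset.univ.erase w) a = 0 :=
        le_antisymm (le_of_not_gt hMw) (margProb_nonneg π hπ0 _ a)
      have hP : π a = 0 := by
        have h1 : margProb π Finset.univ a ≤ margProb π (Finset.univ.erase w) a :=
          margProb_anti π hπ0 (Finset.erase_subset _ _) a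
        rw [margProb_univ, hMw0] at h1
        exact le_antisymm h1 (hπ0 a)
      rw [hP, hMw0, zero_mul, mul_zero]
  refine ⟨hvS, fun U hSU hvU a ha => ?_⟩
  by_cases hwU : w ∈ U
  · have hU : U = Finset.univ.erase v := by
      apply Finset.Subset.antisymm
      · intro u hu
        exact Finset.mem_erase.2 ⟨fun h => hvU (h ▸ hu), Finset.mem_univ u⟩
      · intro u hu
        rcases eq_or_ne u w with rfl | hne
        · exact hwU
        · exact hSU (Finset.mem_erase.2 ⟨hne, hu⟩)
    subst hU
    have hMv : 0 < margProb π (Finset.univ.erase v) a := ha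
    have hMvw : 0 < margProb π S a := lt_of_lt_of_le hMv (margProb_anti π hπ0 hSv a)
    rw [condProb, condProb, Finset.insert_erase (Finset.mem_univ v), margProb_univ, hinsv]
    rw [div_eq_div_iff (ne_of_gt hMv) (ne_of_gt hMvw)]
    have := I a
    linarith
  · have hU : U = S := by
      apply Finset.Subset.antisymm
      · intro u hu
        exact Finset.mem_erase.2 ⟨fun h => hwU (h ▸ hu),
          Finset.mem_erase.2 ⟨fun h => hvU (h ▸ hu), Finset.mem_univ u⟩⟩
      · exact hSU
    rw [hU]

/-- Under the Markov intersection property, the graph `G*` with edges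
`(v,w) ∈ E*` iff `w ∈ ne(v)` is undirected: `w ∈ ne(v) ↔ v ∈ ne(w)`. -/
theorem basicNe_symm (π : (V → A) → ℝ)
    (hπ0 : ∀ x, 0 ≤ π x) (hπ1 : ∑ x, π x = 1)
    (hMIP : ∀ (v : V) (W₁ W₂ : Finset V), IsMarkovNbhd π v W₁ → IsMarkovNbhd π v W₂ →
      IsMarkovNbhd π v (W₁ ∩ W₂)) :
    ∀ v w : V, w ∈ basicNe π v ↔ v ∈ basicNe π w := by
  have key : ∀ v w : V, v ≠ w → w ∈ basicNe π v → v ∈ basicNe π w := by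
    intro v w hvw hw
    simp only [basicNe, Finset.mem_filter, Finset.mem_univ, true_and] at hw ⊢
    intro W hWmk
    by_contra hv
    have hswap := markov_swap π hπ0 hvw hWmk hv
    have := hw _ hswap
    simp at this
  intro v w
  rcases eq_or_ne v w with rfl | hvw
  · exact Iff.rfl
  · exact ⟨key v w hvw, key w v hvw.symm⟩
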